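/- arXiv:2503.01368 — 4 statements merged into one kernel-verified Lean document; each statement's English description precedes it below -/
import Mathlib

section
/- Let γ be a partial allocation that is envy-free among the agents of a set X, where all agents in X have the same valuation v (the same type), and let A be the set of open items with |A| < |X|. If π is an allocation of the open items of A such that the extended allocation γ ∪ π is envy-free, then v(π_i) = 0 for every agent i ∈ X; i.e., when a type contains more agents than there are open items, every agent of that type must receive an open bundle that it values at 0. -/
/-- If a partial allocation `γ` is envy-free among the agents of a set
`X` all having the same valuation `v`, and the number of open items is smaller than
`|X|`, then in any envy-free extension `γ ∪ π` every agent of `X` receives a bundle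
of open items that it values at `0`. -/
theorem large_type_receives_zero_value
    {ι α : Type*} [Fintype ι] [Fintype α] [DecidableEq ι] [DecidableEq α]
    (w : ι → α → ℝ) (hw : ∀ k a, 0 ≤ w k a)
    (X : Finset ι) (v : α → ℝ) (htype : ∀ k ∈ X, w k = v)
    (M' : Finset α)
    (γ : ι → Finset α) (hγsub : ∀ k, γ k ⊆ M') (hγ : ∀ a ∈ M', ∃! k : ι, a ∈ γ k)
    (hγEF : ∀ i ∈ X, ∀ j ∈ X, ∑ a ∈ γ i, v a ≥ ∑ a ∈ γ j, v a)
    (hfew : M'ᶜ.card < X.card)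
    (π : ι → Finset α) (hπsub : ∀ k, π k ⊆ M'ᶜ) (hπ : ∀ a ∈ M'ᶜ, ∃! k : ι, a ∈ π k)
    (hEF : ∀ k l : ι, ∑ a ∈ γ k ∪ π k, w k a ≥ ∑ a ∈ γ l ∪ π l, w k a) :
    ∀ i ∈ X, ∑ a ∈ π i, v a = 0 := by
  have hdisj : ∀ k, Disjoint (γ k) (π k) := fun k =>
    Finset.disjoint_left.mpr fun a ha hb => (Finset.mem_compl.mp (hπsub k hb)) (hγsub k ha)
  obtain ⟨j, hjX, hjempty⟩ : ∃ j ∈ X, π j = ∅ := by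
    by_contra hc
    push_neg at hc
    have hpd : ∀ k ∈ X, ∀ l ∈ X, k ≠ l → Disjoint (π k) (π l) := by
      intro k _ l _ hkl
      refine Finset.disjoint_left.mpr fun a hak hal => hkl ?_
      obtain ⟨m, _, hu⟩ := hπ a (hπsub k hak)
      rw [hu k hak, hu l hal]
    have h1 : X.card ≤ ∑ k ∈ X, (π k).card := by
      rw [Finset.card_eq_sum_ones X]
      exact Finset.sum_le_sum fun k hk =>
        Finset.card_pos.mpr (hc k hk)
    have h2 : ∑ k ∈ X, (π k).card = (X.biUnion π).card :=
      (Finset.card_biUnion hpd).symm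
    have h3 : (X.biUnion π).card ≤ M'ᶜ.card :=
      Finset.card_le_card (Finset.biUnion_subset.mpr fun k _ => hπsub k)
    omega
  intro i hiX
  have h1 := hEF j i
  rw [htype j hjX, hjempty, Finset.union_empty, Finset.sum_union (hdisj i)] at h1
  have h2 := hγEF i hiX j hjX
  have h3 : 0 ≤ ∑ a ∈ π i, v a :=
    Finset.sum_nonneg fun a _ => by rw [← htype i hiX]; exact hw i a
  linarith
end

section
/- Every envy-free partial allocation can be extended to an EF1 allocation: for every fair-division instance with a finite set M of items, finitely many agents with additive nonnegative valuations, and every envy-free partial allocation γ of a subset M' ⊆ M, there exists an allocation π of the open items M \ M' such that the extended allocation γ ∪ π is EF1. -/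
lemma roundRobin_EF1 {ι α : Type*} [Fintype ι] [Nonempty ι] [DecidableEq ι] [DecidableEq α]
    (v : ι → α → ℝ) (hv : ∀ k a, 0 ≤ v k a) (A : Finset α) :
    ∀ L : List ι, L.Nodup → (∀ i, i ∈ L) →
    ∃ π : ι → Finset α, (∀ k, π k ⊆ A) ∧ (∀ a ∈ A, ∃! k : ι, a ∈ π k) ∧
      (∀ i j : ι, (∑ a ∈ π i, v i a ≥ ∑ a ∈ π j, v i a) ∨
        ∃ b ∈ π j, ∑ a ∈ π i, v i a ≥ ∑ a ∈ (π j).erase b, v i a) ∧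
      (∀ i j : ι, List.Sublist [i, j] L → ∑ a ∈ π i, v i a ≥ ∑ a ∈ π j, v i a) := by
  induction A using Finset.strongInduction with
  | _ A ih =>
    intro L hnd hmem
    rcases A.eq_empty_or_nonempty with rfl | hA
    · refine ⟨fun _ => ∅, fun _ => Finset.Subset.refl _, by simp, ?_, ?_⟩
      · intro i j; left; simp
      · intro i j _; simp
    · obtain ⟨h, t, rfl⟩ : ∃ h t, L = h :: t := by
        cases L with
        | nil => exact absurd (hmem (Classical.arbitrary ι)) List.not_mem_nil
        | cons h t => exact ⟨h, t, rfl⟩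
      obtain ⟨a, haA, hamax⟩ := A.exists_max_image (v h) hA
      have hnd' : (t ++ [h]).Nodup := by
        simp only [List.nodup_cons] at hnd
        simp [List.nodup_append, hnd.2, fun hh => hnd.1 hh]
        intro x hx hxh; exact hnd.1 (hxh ▸ hx)
      have hmem' : ∀ i, i ∈ t ++ [h] := by
        intro i
        rcases List.mem_cons.mp (hmem i) with rfl | hi
        · simp
        · simp [hi]
      obtain ⟨π', h1', h2', h3', h4'⟩ := ih (A.erase a) (Finset.erase_ssubset haA) (t ++ [h]) hnd' hmem'
      have hanot : ∀ k, a ∉ π' k := fun k hk => (Finset.notMem_erase a A) (h1' k hk)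
      have hhnott : h ∉ t := (List.nodup_cons.mp hnd).1
      set π : ι → Finset α := fun k => if k = h then insert a (π' h) else π' k with hπ
      have hπh : π h = insert a (π' h) := by simp [hπ]
      have hπne : ∀ k, k ≠ h → π k = π' k := fun k hk => by simp [hπ, hk]
      have hsumh : ∀ i, ∑ a' ∈ π h, v i a' = v i a + ∑ a' ∈ π' h, v i a' := by
        intro i; rw [hπh, Finset.sum_insert (hanot h)]
      -- everyone (weakly) prefers own old bundle to π' h
      have key : ∀ i, ∑ a' ∈ π' i, v i a' ≥ ∑ a' ∈ π' h, v i a' := by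
        intro i
        rcases eq_or_ne i h with rfl | hih
        · exact le_refl _
        · have hit : i ∈ t := (List.mem_cons.mp (hmem i)).resolve_left hih
          exact h4' i h ((List.singleton_sublist.mpr hit).append (List.Sublist.refl [h]))
      -- own bundle only gained value
      have hmono : ∀ i, ∑ a' ∈ π i, v i a' ≥ ∑ a' ∈ π' i, v i a' := by
        intro i
        rcases eq_or_ne i h with rfl | hih
        · rw [hsumh]; linarith [hv i a]
        · rw [hπne i hih]
      refine ⟨π, ?_, ?_, ?_, ?_⟩
      · intro k
        rcases eq_or_ne k h with rfl | hk
        · rw [hπh]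
          exact Finset.insert_subset haA ((h1' k).trans (A.erase_subset a))
        · rw [hπne k hk]
          exact (h1' k).trans (A.erase_subset a)
      · intro b hb
        rcases eq_or_ne b a with rfl | hba
        · refine ⟨h, by simp [hπh], ?_⟩
          intro k hk
          by_contra hkh
          rw [hπne k hkh] at hk
          exact hanot k hk
        · obtain ⟨k, hk, huk⟩ := h2' b (Finset.mem_erase.mpr ⟨hba, hb⟩)
          refine ⟨k, ?_, ?_⟩
          · rcases eq_or_ne k h with rfl | hkh
            · rw [hπh]; exact Finset.mem_insert_of_mem hk
            · rw [hπne k hkh]; exact hk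
          · intro m hm
            apply huk
            rcases eq_or_ne m h with rfl | hmh
            · rw [hπh] at hm
              exact (Finset.mem_insert.mp hm).resolve_left hba
            · rwa [hπne m hmh] at hm
      · -- EF1
        intro i j
        rcases eq_or_ne j h with rfl | hjh
        · right
          refine ⟨a, by simp [hπh], ?_⟩
          rw [hπh, Finset.erase_insert (hanot j)]
          exact le_trans (key i) (hmono i)
        · rw [hπne j hjh]
          rcases h3' i j with hle | ⟨b, hb, hble⟩
          · exact Or.inl (le_trans hle (hmono i))
          · exact Or.inr ⟨b, hb, le_trans hble (hmono i)⟩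
      · -- order property
        intro i j hs
        cases hs with
        | cons _ hs =>
          -- [i,j] <+ t
          have hjt : j ∈ t := hs.subset (by simp)
          have hjh : j ≠ h := fun e => hhnott (e ▸ hjt)
          rw [hπne j hjh]
          exact le_trans (h4' i j (hs.trans (List.sublist_append_left t [h]))) (hmono i)
        | cons_cons _ hs =>
          -- i = h, [j] <+ t
          have hjt : j ∈ t := hs.subset (by simp)
          have hjh : j ≠ h := fun e => hhnott (e ▸ hjt)
          rw [hπne j hjh, hsumh]
          rcases h3' h j with hle | ⟨b, hb, hble⟩
          · linarith [hv h a]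
          · have hbA : b ∈ A := (A.erase_subset a) (h1' j hb)
            have hab : v h b ≤ v h a := hamax b hbA
            rw [Finset.sum_erase_eq_sub hb] at hble
            linarith

/-- Every envy-free partial allocation can be extended to an EF1
allocation of all the items. -/
theorem envyFree_partial_extends_to_EF1
    {ι α : Type*} [Fintype ι] [Fintype α] [Nonempty ι] [DecidableEq α]
    (v : ι → α → ℝ) (hv : ∀ k a, 0 ≤ v k a)
    (M' : Finset α)
    (γ : ι → Finset α) (hγsub : ∀ k, γ k ⊆ M') (hγ : ∀ a ∈ M', ∃! k : ι, a ∈ γ k)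
    (hγEF : ∀ i j : ι, ∑ a ∈ γ i, v i a ≥ ∑ a ∈ γ j, v i a) :
    ∃ π : ι → Finset α, (∀ k, π k ⊆ M'ᶜ) ∧ (∀ a ∈ M'ᶜ, ∃! k : ι, a ∈ π k) ∧
      ∀ i j : ι, (∑ a ∈ γ i ∪ π i, v i a ≥ ∑ a ∈ γ j ∪ π j, v i a) ∨
        ∃ b ∈ γ j ∪ π j, ∑ a ∈ γ i ∪ π i, v i a ≥ ∑ a ∈ (γ j ∪ π j).erase b, v i a := by
  classical
  obtain ⟨π, h1, h2, h3, _⟩ := roundRobin_EF1 v hv M'ᶜ Finset.univ.toList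
    Finset.univ.nodup_toList (fun i => by simp)
  have hdisj : ∀ k, Disjoint (γ k) (π k) := by
    intro k
    exact Finset.disjoint_left.mpr fun a ha hb =>
      (Finset.mem_compl.mp (h1 k hb)) (hγsub k ha)
  have hsum : ∀ i j : ι, ∑ a ∈ γ j ∪ π j, v i a = (∑ a ∈ γ j, v i a) + ∑ a ∈ π j, v i a :=
    fun i j => Finset.sum_union (hdisj j)
  refine ⟨π, h1, h2, ?_⟩
  intro i j
  rcases h3 i j with hle | ⟨b, hb, hble⟩
  · left
    rw [hsum i i, hsum i j]
    exact add_le_add (hγEF i j) hle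
  · right
    have hbu : b ∈ γ j ∪ π j := Finset.mem_union_right _ hb
    refine ⟨b, hbu, ?_⟩
    rw [Finset.sum_erase_eq_sub hbu, hsum i i, hsum i j]
    rw [Finset.sum_erase_eq_sub hb] at hble
    linarith [hγEF i j]
end

section
/- Consider the instance with two agents 1 and 2 which have identical additive valuations, items g₁, g₂, z, where both agents value g₁ and g₂ at 1 and z at 2, and the partial allocation γ assigning g₁ to agent 1 and g₂ to agent 2 (with z open). Then γ is envy-free, yet for every allocation of the open item z the resulting extended allocation is not EFX. Hence there exists an envy-free partial allocation of items to 2 agents which cannot be extended to an EFX allocation. -/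
/-- The common valuation of both agents: items `0 = g₁` and `1 = g₂` are worth `1`,
the open item `2 = z` is worth `2`. -/
noncomputable def efxCounterVal : Fin 2 → Fin 3 → ℝ := fun _ a => if a = 2 then 2 else 1

/-- The partial allocation: agent `0` holds `g₁`, agent `1` holds `g₂`; item `z` is open. -/
def efxCounterGamma : Fin 2 → Finset (Fin 3) := ![{0}, {1}]

/-- For the instance with two agents of identical valuations
(`g₁, g₂` worth `1`, `z` worth `2`) and the partial allocation giving `g₁` to agent `0`
and `g₂` to agent `1`, the partial allocation is envy-free, but no allocation of the
open item `z` yields an EFX extended allocation. Hence there is an envy-free partial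
allocation for two agents that cannot be extended to an EFX allocation. -/
theorem envyFree_partial_not_extendable_to_EFX :
    (∀ i j : Fin 2, ∑ a ∈ efxCounterGamma i, efxCounterVal i a ≥
        ∑ a ∈ efxCounterGamma j, efxCounterVal i a) ∧
    (∀ π : Fin 2 → Finset (Fin 3), (∀ k, π k ⊆ {2}) →
      (∀ a ∈ ({2} : Finset (Fin 3)), ∃! k : Fin 2, a ∈ π k) →
      ¬ (∀ i j : Fin 2, ∀ b ∈ efxCounterGamma j ∪ π j,
          ∑ a ∈ efxCounterGamma i ∪ π i, efxCounterVal i a ≥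
            ∑ a ∈ (efxCounterGamma j ∪ π j).erase b, efxCounterVal i a)) := by
  constructor
  · intro i j
    fin_cases i <;> fin_cases j <;>
      simp [efxCounterGamma, efxCounterVal]
  · intro π hsub huniq hEFX
    obtain ⟨k, hk, hkuniq⟩ := huniq 2 (by simp)
    have hπk : π k = {2} := by
      apply Finset.Subset.antisymm (hsub k)
      intro a ha
      simp only [Finset.mem_singleton] at ha
      subst ha; exact hk
    have hother : ∀ m : Fin 2, m ≠ k → π m = ∅ := by
      intro m hm
      by_contra h
      obtain ⟨a, ha⟩ := Finset.nonempty_iff_ne_empty.2 h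
      have := hsub m ha
      simp only [Finset.mem_singleton] at this
      subst this
      exact hm (hkuniq m ha)
    fin_cases k
    · have h0 : π 0 = {2} := hπk
      have h1 : π 1 = ∅ := hother 1 (by decide)
      have := hEFX 1 0 0 (by simp [efxCounterGamma, h0])
      simp [efxCounterGamma, efxCounterVal, h0, h1] at this
    · have h1 : π 1 = {2} := hπk
      have h0 : π 0 = ∅ := hother 0 (by decide)
      have := hEFX 0 1 1 (by simp [efxCounterGamma, h1])
      simp [efxCounterGamma, efxCounterVal, h0, h1] at this
end

section
/- Integer-program characterization of envy-free extensions with restricted recipients: let γ be a partial allocation of M' ⊆ M, let A = M \ M' be the open items, let S ⊆ N be a set of recipient agents, let T be the set of item types occurring among the open items, let m_t be the number of open items of type t, and for an agent i write v_i(t) for the common value agent i assigns to items of type t. Then there exists an allocation π of the open items with π_j = ∅ for every j ∉ S such that γ ∪ π is envy-free, if and only if there exist nonnegative integers x_{i,t} for i ∈ S and t ∈ T (and setting x_{j,t} = 0 for j ∉ S) satisfying: (1) Σ_{i∈S} x_{i,t} = m_t for every t ∈ T; (2) for every i ∈ S and every agent j ∈ N, v_i(γ_i) + Σ_{t∈T}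 x_{i,t}·v_i(t) ≥ v_i(γ_j) + Σ_{t∈T} x_{j,t}·v_i(t); and (3) for every i ∉ S and every j ∈ S, v_i(γ_i) ≥ v_i(γ_j) + Σ_{t∈T} x_{j,t}·v_i(t). -/
/-- Partition a finset `B` into pieces of prescribed sizes `n i` for `i ∈ S`. -/
theorem exists_partition_of_card {α ι : Type*} [DecidableEq α] [DecidableEq ι]
    (n : ι → ℕ) (S : Finset ι) :
    ∀ B : Finset α, B.card = ∑ i ∈ S, n i →
      ∃ P : ι → Finset α, (∀ i, P i ⊆ B) ∧ (∀ i ∉ S, P i = ∅) ∧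
        (∀ i ∈ S, (P i).card = n i) ∧ (∀ a ∈ B, ∃! i, a ∈ P i) := by
  classical
  induction S using Finset.induction_on with
  | empty =>
      intro B hB
      simp only [Finset.sum_empty, Finset.card_eq_zero] at hB
      subst hB
      exact ⟨fun _ => ∅, fun _ => Finset.Subset.refl _, fun _ _ => rfl,
        fun i hi => absurd hi (Finset.notMem_empty i), fun a ha => absurd ha (by simp)⟩
  | @insert i S hi IH =>
      intro B hB
      rw [Finset.sum_insert hi] at hB
      obtain ⟨C, hCB, hCcard⟩ := Finset.exists_subset_card_eq (s := B) (n := n i) (by omega)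
      have hsd : (B \ C).card = ∑ j ∈ S, n j := by
        rw [Finset.card_sdiff_of_subset hCB, hB, hCcard]; omega
      obtain ⟨P, hP1, hP2, hP3, hP4⟩ := IH (B \ C) hsd
      refine ⟨fun j => if j = i then C else P j, ?_, ?_, ?_, ?_⟩
      · intro j
        by_cases h : j = i
        · simp [h, hCB]
        · simp only [h, if_neg]
          exact (hP1 j).trans Finset.sdiff_subset
      · intro j hj
        have hji : j ≠ i := fun h => hj (h ▸ Finset.mem_insert_self i S)
        have hjS : j ∉ S := fun h => hj (Finset.mem_insert_of_mem h)
        simp [hji, hP2 j hjS]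
      · intro j hj
        rcases Finset.mem_insert.mp hj with h | h
        · simp [h, hCcard]
        · have hji : j ≠ i := fun he => hi (he ▸ h)
          simp [hji, hP3 j h]
      · intro a ha
        by_cases hC : a ∈ C
        · refine ⟨i, by simp [hC], ?_⟩
          intro j hj
          by_cases hji : j = i
          · exact hji
          · simp only [hji, if_neg] at hj
            exact absurd ((hP1 j hj)) (by simp [hC])
        · have haBC : a ∈ B \ C := Finset.mem_sdiff.mpr ⟨ha, hC⟩
          obtain ⟨k, hk1, hk2⟩ := hP4 a haBC
          have hki : k ≠ i := fun he => by
            subst he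
            exact (Finset.mem_sdiff.mp (hP1 k hk1)).2 (by
              exact absurd (hP2 k hi ▸ hk1) (Finset.notMem_empty a))
          refine ⟨k, by simp [hki, hk1], ?_⟩
          intro j hj
          by_cases hji : j = i
          · subst hji; simp only [if_pos rfl] at hj; exact absurd hj hC
          · simp only [hji, if_neg] at hj
            exact hk2 j hj

/-- Integer-program characterization of envy-free extensions with
restricted recipients. Valuations factor through item types via `τ` and `w`
(`v i a = w i (τ a)`); `γ` is a partial allocation of `M'` that is envy-free among the
agents outside the recipient set `S`. Then an envy-free extension assigning all open
items to agents of `S` exists iff there are nonnegative integers `x i t` (zero outside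
`S`) satisfying the counting constraint (1) and the no-envy constraints (2) and (3). -/
theorem restricted_extension_iff_ILP
    {ι α T : Type*} [Fintype ι] [Fintype α] [Fintype T]
    [DecidableEq ι] [DecidableEq α] [DecidableEq T]
    (v : ι → α → ℝ) (hv : ∀ k a, 0 ≤ v k a)
    (τ : α → T) (w : ι → T → ℝ) (hw : ∀ i a, v i a = w i (τ a))
    (M' : Finset α)
    (γ : ι → Finset α) (hγsub : ∀ k, γ k ⊆ M') (hγ : ∀ a ∈ M', ∃! k : ι, a ∈ γ k)
    (S : Finset ι)
    (hγEF : ∀ i ∉ S, ∀ j ∉ S, ∑ a ∈ γ i, v i a ≥ ∑ a ∈ γ j, v i a) :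
    (∃ π : ι → Finset α, (∀ k, π k ⊆ M'ᶜ) ∧ (∀ a ∈ M'ᶜ, ∃! k : ι, a ∈ π k) ∧
        (∀ j ∉ S, π j = ∅) ∧
        (∀ i j : ι, ∑ a ∈ γ i ∪ π i, v i a ≥ ∑ a ∈ γ j ∪ π j, v i a))
    ↔
    (∃ x : ι → T → ℕ, (∀ j ∉ S, ∀ t, x j t = 0) ∧
        (∀ t : T, ∑ i ∈ S, x i t = (M'ᶜ.filter (fun a => τ a = t)).card) ∧
        (∀ i ∈ S, ∀ j : ι,
          (∑ a ∈ γ i, v i a) + ∑ t : T, (x i t : ℝ) * w i t ≥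
            (∑ a ∈ γ j, v i a) + ∑ t : T, (x j t : ℝ) * w i t) ∧
        (∀ i ∉ S, ∀ j ∈ S,
          ∑ a ∈ γ i, v i a ≥
            (∑ a ∈ γ j, v i a) + ∑ t : T, (x j t : ℝ) * w i t)) := by
  classical
  -- fiberwise sum lemma
  have fiber : ∀ (k : ι) (s : Finset α),
      ∑ a ∈ s, v k a = ∑ t : T, ((s.filter (fun a => τ a = t)).card : ℝ) * w k t := by
    intro k s
    rw [← Finset.sum_fiberwise s τ (fun a => v k a)]
    refine Finset.sum_congr rfl fun t _ => ?_
    rw [Finset.sum_congr rfl (fun a ha => ?_), Finset.sum_const, nsmul_eq_mul]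
    rw [hw k a, (Finset.mem_filter.mp ha).2]
  have disjγπ : ∀ (π : ι → Finset α), (∀ k, π k ⊆ M'ᶜ) →
      ∀ i j : ι, Disjoint (γ i) (π j) := by
    intro π hπ i j
    refine Finset.disjoint_left.mpr fun a ha ha' => ?_
    exact (Finset.mem_compl.mp (hπ j ha')) (hγsub i ha)
  constructor
  · rintro ⟨π, hπsub, hπpart, hπS, hEF⟩
    refine ⟨fun i t => ((π i).filter (fun a => τ a = t)).card, ?_, ?_, ?_, ?_⟩
    · intro j hj t; simp [hπS j hj]
    · intro t
      have key : M'ᶜ.filter (fun a => τ a = t) =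
          S.biUnion (fun i => (π i).filter (fun a => τ a = t)) := by
        ext a
        simp only [Finset.mem_filter, Finset.mem_biUnion]
        constructor
        · rintro ⟨ha, hta⟩
          obtain ⟨k, hk, -⟩ := hπpart a ha
          refine ⟨k, ?_, hk, hta⟩
          by_contra hkS
          exact absurd (hπS k hkS ▸ hk) (Finset.notMem_empty a)
        · rintro ⟨k, -, hk, hta⟩
          exact ⟨hπsub k hk, hta⟩
      rw [key, Finset.card_biUnion]
      intro i hiS j hjS hij
      refine Finset.disjoint_left.mpr fun a ha ha' => hij ?_
      obtain ⟨k, -, huniq⟩ := hπpart a (hπsub i (Finset.mem_filter.mp ha).1)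
      rw [huniq i (Finset.mem_filter.mp ha).1, huniq j (Finset.mem_filter.mp ha').1]
    · intro i hiS j
      have := hEF i j
      rwa [Finset.sum_union (disjγπ π hπsub i i), Finset.sum_union (disjγπ π hπsub j j),
        fiber i (π i), fiber i (π j)] at this
    · intro i hiS j hjS
      have := hEF i j
      rwa [Finset.sum_union (disjγπ π hπsub i i), Finset.sum_union (disjγπ π hπsub j j),
        hπS i hiS, Finset.sum_empty, add_zero, fiber i (π j)] at this
  · rintro ⟨x, hx0, hxcard, hx2, hx3⟩
    have hpart : ∀ t : T, ∃ P : ι → Finset α,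
        (∀ i, P i ⊆ M'ᶜ.filter (fun a => τ a = t)) ∧ (∀ i ∉ S, P i = ∅) ∧
        (∀ i ∈ S, (P i).card = x i t) ∧
        (∀ a ∈ M'ᶜ.filter (fun a => τ a = t), ∃! i, a ∈ P i) :=
      fun t => exists_partition_of_card (fun i => x i t) S _ (hxcard t).symm
    choose P hP1 hP2 hP3 hP4 using hpart
    set π : ι → Finset α := fun i => Finset.univ.biUnion (fun t => P t i) with hπdef
    have hmemπ : ∀ i a, a ∈ π i ↔ ∃ t, a ∈ P t i := by
      intro i a; simp [hπdef]
    have hPfib : ∀ t i a, a ∈ P t i → a ∈ M'ᶜ ∧ τ a = t := by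
      intro t i a ha
      exact Finset.mem_filter.mp (hP1 t i ha)
    have hπsub : ∀ k, π k ⊆ M'ᶜ := by
      intro k a ha
      obtain ⟨t, ht⟩ := (hmemπ k a).mp ha
      exact (hPfib t k a ht).1
    have hπS : ∀ j ∉ S, π j = ∅ := by
      intro j hj
      refine Finset.eq_empty_of_forall_notMem fun a ha => ?_
      obtain ⟨t, ht⟩ := (hmemπ j a).mp ha
      exact absurd (hP2 t j hj ▸ ht) (Finset.notMem_empty a)
    have hπfilter : ∀ i t, (π i).filter (fun a => τ a = t) = P t i := by
      intro i t
      ext a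
      simp only [Finset.mem_filter, hmemπ]
      constructor
      · rintro ⟨⟨t', ht'⟩, hta⟩
        have htt : t' = t := ((hPfib t' i a ht').2).symm.trans hta
        exact htt ▸ ht'
      · intro ha
        exact ⟨⟨t, ha⟩, (hPfib t i a ha).2⟩
    have hπsum : ∀ k i, ∑ a ∈ π i, v k a = ∑ t : T, (x i t : ℝ) * w k t := by
      intro k i
      rw [fiber k (π i)]
      refine Finset.sum_congr rfl fun t _ => ?_
      rw [hπfilter i t]
      by_cases hiS : i ∈ S
      · rw [hP3 t i hiS]
      · rw [hP2 t i hiS, hx0 i hiS t]; simp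
    refine ⟨π, hπsub, ?_, hπS, ?_⟩
    · intro a ha
      have haf : a ∈ M'ᶜ.filter (fun b => τ b = τ a) := Finset.mem_filter.mpr ⟨ha, rfl⟩
      obtain ⟨k, hk, huniq⟩ := hP4 (τ a) a haf
      refine ⟨k, (hmemπ k a).mpr ⟨τ a, hk⟩, ?_⟩
      intro j hj
      obtain ⟨t, ht⟩ := (hmemπ j a).mp hj
      have : t = τ a := ((hPfib t j a ht).2).symm
      exact huniq j (this ▸ ht)
    · intro i j
      rw [Finset.sum_union (disjγπ π hπsub i i), Finset.sum_union (disjγπ π hπsub j j),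
        hπsum i i, hπsum i j]
      by_cases hiS : i ∈ S
      · exact hx2 i hiS j
      · by_cases hjS : j ∈ S
        · have := hx3 i hiS j hjS
          have hxi : ∑ t : T, (x i t : ℝ) * w i t = 0 := by
            refine Finset.sum_eq_zero fun t _ => ?_
            rw [hx0 i hiS t]; simp
          rw [hxi, add_zero]; exact this
        · have hxi : ∑ t : T, (x i t : ℝ) * w i t = 0 := by
            refine Finset.sum_eq_zero fun t _ => ?_
            rw [hx0 i hiS t]; simp
          have hxj : ∑ t : T, (x j t : ℝ) * w i t = 0 := by
            refine Finset.sum_eq_zero fun t _ => ?_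
            rw [hx0 j hjS t]; simp
          rw [hxi, hxj, add_zero, add_zero]
          exact hγEF i hiS j hjS
end
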